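/- Under the DSMT setup, if the stepsize satisfies α ≤ (1−β)/(3βL), then for every k ≥ 0: E[f(x̄_k) − f^*] ≤ E[f(d̄_k) − f^*] + (αβ/(1−β)) E[‖∇f(x̄_k)‖²] + (αβ/(1−β)) E[‖z̄_{k−1}‖²]. -/

import Mathlib

open MeasureTheory Matrix Finset ProbabilityTheory

noncomputable section

/-- Points live in `ℝ^p` (Euclidean space). -/
abbrev Vec (p : ℕ) := EuclideanSpace ℝ (Fin p)

/-- A stacked variable: one row (point of `ℝ^p`) per agent. -/
abbrev Stacked (n p : ℕ) := Fin n → Vec p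

/-- Average of the rows of a stacked variable. -/
def rowAvg {n p : ℕ} (X : Stacked n p) : Vec p := (n : ℝ)⁻¹ • ∑ i, X i

/-- Squared Frobenius norm of a stacked variable. -/
def fro2 {n p : ℕ} (X : Stacked n p) : ℝ := ∑ i, ‖X i‖ ^ 2

/-- Consensus error `Π X`: row `i` is `Xᵢ − X̄`. -/
def consErr {n p : ℕ} (X : Stacked n p) : Stacked n p := fun i => X i - rowAvg X

/-- A matrix acting on a stacked variable. -/
def mulStacked {n p : ℕ} (M : Matrix (Fin n) (Fin n) ℝ) (X : Stacked n p) : Stacked n p :=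
  fun i => ∑ j, M i j • X j

/-- Application of the augmented matrix `W̃ = [[(1+η)W, −ηI], [I, 0]]` to an augmented
stacked variable `(top block, bottom block)`. -/
def lcaMul {n p : ℕ} (W : Matrix (Fin n) (Fin n) ℝ) (ηw : ℝ)
    (X : Stacked n p × Stacked n p) : Stacked n p × Stacked n p :=
  ((1 + ηw) • mulStacked W X.1 - ηw • X.2, X.1)

/-- Squared Frobenius norm of an augmented stacked variable. -/
def afro2 {n p : ℕ} (X : Stacked n p × Stacked n p) : ℝ := fro2 X.1 + fro2 X.2

/-- The augmented consensus operator `Π̃ = diag(Π, Π)`. -/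
def aconsErr {n p : ℕ} (X : Stacked n p × Stacked n p) : Stacked n p × Stacked n p :=
  (consErr X.1, consErr X.2)

/-- Spectral norm (ℓ₂ operator norm) of a real matrix. -/
def specNorm {n : ℕ} (M : Matrix (Fin n) (Fin n) ℝ) : ℝ :=
  ‖LinearMap.toContinuousLinearMap (Matrix.toEuclideanLin M)‖

/-- The matrix `(1/n) 𝟙𝟙ᵀ` with all entries `1/n`. -/
def avgMatrix (n : ℕ) : Matrix (Fin n) (Fin n) ℝ := Matrix.of fun _ _ => (n : ℝ)⁻¹

/-- The full Distributed Stochastic Momentum Tracking (DSMT) setup: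
`L`-smooth lower-bounded local objectives, a symmetric doubly stochastic mixing
matrix with spectral gap, the pathwise DSMT recursions driven by stochastic
gradients satisfying the ABC variance condition with respect to a filtration,
independently across agents. -/
structure DSMT (n p : ℕ) (Ω : Type) [mΩ : MeasurableSpace Ω] [StandardBorelSpace Ω]
    (μ : Measure Ω) [IsProbabilityMeasure μ] where
  /-- smoothness constant -/
  L : ℝ
  /-- ABC condition constant -/
  C : ℝ
  /-- ABC condition noise level -/
  sig : ℝ
  /-- local objective functions -/
  f : Fin n → Vec p → ℝ
  /-- infima of the local objectives -/
  fStar : Fin n → ℝ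
  /-- mixing matrix -/
  W : Matrix (Fin n) (Fin n) ℝ
  /-- spectral norm of `W − (1/n)𝟙𝟙ᵀ` -/
  lam : ℝ
  /-- LCA parameter `η_w` -/
  ηw : ℝ
  /-- the filtration generated by the samples -/
  ℱ : Filtration ℕ mΩ
  /-- stepsize -/
  α : ℝ
  /-- momentum parameter -/
  β : ℝ
  /-- augmented iterates `x̃`, `ỹ` and the iterates `x`, `y`, `z`, `g` -/
  xt : ℕ → Ω → Stacked n p × Stacked n p
  yt : ℕ → Ω → Stacked n p × Stacked n p
  x : ℕ → Ω → Stacked n p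
  y : ℕ → Ω → Stacked n p
  z : ℕ → Ω → Stacked n p
  g : ℕ → Ω → Stacked n p
  /-- the (deterministic) initial point -/
  x0 : Stacked n p
  hn : 0 < n
  hp : 0 < p
  hL : 0 < L
  hC : 0 ≤ C
  hsig : 0 ≤ sig
  hα : 0 < α
  hβ0 : 0 < β
  hβ1 : β < 1
  hdiff : ∀ i, Differentiable ℝ (f i)
  hsmooth : ∀ i v v', ‖gradient (f i) v - gradient (f i) v'‖ ≤ L * ‖v - v'‖
  hfStar : ∀ i, IsGLB (Set.range (f i)) (fStar i)
  hWsymm : W.IsSymm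
  hWnonneg : ∀ i j, 0 ≤ W i j
  hWdiag : ∀ i, 0 < W i i
  hWrow : ∀ i, ∑ j, W i j = 1
  hWcol : ∀ j, ∑ i, W i j = 1
  hlamdef : lam = specNorm (W - avgMatrix n)
  hlam1 : lam < 1
  hηw : ηw = 1 / (1 + Real.sqrt (1 - lam ^ 2))
  hx : ∀ k ω, x k ω = (xt k ω).1
  hy : ∀ k ω, y k ω = (yt k ω).1
  hxt : ∀ k ω, xt (k + 1) ω =
    lcaMul W ηw ((xt k ω).1 - α • y k ω, (xt k ω).2 - α • y k ω)
  hz : ∀ k ω, z (k + 1) ω = β • z k ω + (1 - β) • g (k + 1) ω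
  hyt : ∀ k ω, yt (k + 1) ω =
    lcaMul W ηw ((yt k ω).1 + z (k + 1) ω - z k ω, (yt k ω).2 + z (k + 1) ω - z k ω)
  hx0 : ∀ ω, x 0 ω = x0
  hxt0 : ∀ ω, (xt 0 ω).2 = (xt 0 ω).1
  hz0 : ∀ ω, z 0 ω = (1 - β) • g 0 ω
  hy0 : ∀ ω, y 0 ω = z 0 ω
  hyt0 : ∀ ω, (yt 0 ω).2 = (yt 0 ω).1
  hx_adapted : ∀ k, StronglyMeasurable[ℱ k] (x k)
  hg_meas : ∀ k, StronglyMeasurable[ℱ (k + 1)] (g k)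
  hx_L2 : ∀ k i, MemLp (fun ω => x k ω i) 2 μ
  hg_L2 : ∀ k i, MemLp (fun ω => g k ω i) 2 μ
  habc_mean : ∀ k i,
    μ[(fun ω => g k ω i) | ℱ k] =ᵐ[μ] fun ω => gradient (f i) (x k ω i)
  habc_var : ∀ k i,
    μ[(fun ω => ‖g k ω i - gradient (f i) (x k ω i)‖ ^ 2) | ℱ k]
      ≤ᵐ[μ] fun ω => C * (f i (x k ω i) - fStar i) + sig ^ 2
  hindep : ∀ k, iCondIndepFun (ℱ k) (ℱ.le k)
    (fun i ω => g k ω i - gradient (f i) (x k ω i)) μ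

namespace DSMT

variable {n p : ℕ} {Ω : Type} [mΩ : MeasurableSpace Ω] [StandardBorelSpace Ω]
  {μ : Measure Ω} [IsProbabilityMeasure μ]

/-- `ρ̃_w := √η_w`. -/
def ρw (S : DSMT n p Ω μ) : ℝ := Real.sqrt S.ηw

/-- The aggregate objective `f = (1/n) ∑ᵢ fᵢ`. -/
def F (S : DSMT n p Ω μ) : Vec p → ℝ := fun v => (n : ℝ)⁻¹ * ∑ i, S.f i v

/-- `f* := inf f`. -/
def Fstar (S : DSMT n p Ω μ) : ℝ := sInf (Set.range S.F)

/-- `σ_f^* := f^* − (1/n) ∑ᵢ fᵢ^*`. -/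
def sigf (S : DSMT n p Ω μ) : ℝ := S.Fstar - (n : ℝ)⁻¹ * ∑ i, S.fStar i

/-- The averaged iterate `x̄ₖ`. -/
def xbar (S : DSMT n p Ω μ) (k : ℕ) (ω : Ω) : Vec p := rowAvg (S.x k ω)

/-- The shifted momentum `z_{k−1}` with `z_{−1} := 0`. -/
def zm (S : DSMT n p Ω μ) : ℕ → Ω → Stacked n p
  | 0 => fun _ => 0
  | (k + 1) => S.z k

/-- The shifted iterate `x_{k−1}` with `x_{−1} := x₀`. -/
def xm (S : DSMT n p Ω μ) : ℕ → Ω → Stacked n p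
  | 0 => S.x 0
  | (k + 1) => S.x k

/-- The auxiliary averages `d̄ₖ`. -/
def dbar (S : DSMT n p Ω μ) : ℕ → Ω → Vec p
  | 0 => fun ω => rowAvg (S.x 0 ω)
  | (k + 1) => fun ω =>
      (1 / (1 - S.β)) • rowAvg (S.x (k + 1) ω) - (S.β / (1 - S.β)) • rowAvg (S.x k ω)

/-- `E[f(x̄ₖ) − f^*]`. -/
def Efx (S : DSMT n p Ω μ) (k : ℕ) : ℝ := ∫ ω, (S.F (S.xbar k ω) - S.Fstar) ∂μ

/-- `E[f(d̄ₖ) − f^*]`. -/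
def Efd (S : DSMT n p Ω μ) (k : ℕ) : ℝ := ∫ ω, (S.F (S.dbar k ω) - S.Fstar) ∂μ

/-- `E[‖∇f(x̄ₖ)‖²]`. -/
def Egrad (S : DSMT n p Ω μ) (k : ℕ) : ℝ := ∫ ω, ‖gradient S.F (S.xbar k ω)‖ ^ 2 ∂μ

/-- `E[‖z̄ₖ‖²]`. -/
def Ez (S : DSMT n p Ω μ) (k : ℕ) : ℝ := ∫ ω, ‖rowAvg (S.z k ω)‖ ^ 2 ∂μ

/-- `E[‖z̄_{k−1}‖²]` (with `z_{−1} := 0`). -/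
def Ezm (S : DSMT n p Ω μ) (k : ℕ) : ℝ := ∫ ω, ‖rowAvg (S.zm k ω)‖ ^ 2 ∂μ

/-- `E[‖Π xₖ‖²]`. -/
def EconsX (S : DSMT n p Ω μ) (k : ℕ) : ℝ := ∫ ω, fro2 (consErr (S.x k ω)) ∂μ

/-- `E[‖Π yₖ‖²]`. -/
def EconsY (S : DSMT n p Ω μ) (k : ℕ) : ℝ := ∫ ω, fro2 (consErr (S.y k ω)) ∂μ

/-- `E[‖Π̃ x̃ₖ‖²]`. -/
def EconsXt (S : DSMT n p Ω μ) (k : ℕ) : ℝ := ∫ ω, afro2 (aconsErr (S.xt k ω)) ∂μ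

/-- `E[‖Π̃ ỹₖ‖²]`. -/
def EconsYt (S : DSMT n p Ω μ) (k : ℕ) : ℝ := ∫ ω, afro2 (aconsErr (S.yt k ω)) ∂μ

/-- `E[‖zₖ − ∇F(𝟙x̄ₖᵀ)‖²]`. -/
def Etrack (S : DSMT n p Ω μ) (k : ℕ) : ℝ :=
  ∫ ω, fro2 (fun i => S.z k ω i - gradient (S.f i) (S.xbar k ω)) ∂μ

/-- `E[‖z_{k−1} − ∇F(𝟙x̄_{k−1}ᵀ)‖²]` (with `z_{−1} := 0`, `x_{−1} := x₀`). -/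
def Etrackm (S : DSMT n p Ω μ) (k : ℕ) : ℝ :=
  ∫ ω, fro2 (fun i => S.zm k ω i - gradient (S.f i) (rowAvg (S.xm k ω))) ∂μ

/-- `Δ₀ := f(x̄₀) − f^*`. -/
def Δ0 (S : DSMT n p Ω μ) : ℝ := S.F (rowAvg S.x0) - S.Fstar

/-- `∑ᵢ ‖∇fᵢ(x̄₀)‖²`. -/
def gradSum0 (S : DSMT n p Ω μ) : ℝ := ∑ i, ‖gradient (S.f i) (rowAvg S.x0)‖ ^ 2

/-- `(1/n) ∑ᵢ E[f(x_{i,k}) − f^*]`. -/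
def EfAgents (S : DSMT n p Ω μ) (k : ℕ) : ℝ :=
  (n : ℝ)⁻¹ * ∑ i, ∫ ω, (S.F (S.x k ω i) - S.Fstar) ∂μ

end DSMT

/-! Because `W` is column stochastic and both blocks of `x̃ₖ`, `ỹₖ` share their averages, the
mixing step leaves averages untouched and gradient tracking gives `ȳₖ = z̄ₖ`; hence
`x̄ₖ₊₁ = x̄ₖ − α z̄ₖ` and `x̄ₖ − d̄ₖ = c z̄ₖ₋₁` with `c = αβ/(1−β)`. The `L`-smoothness bound for
`f(d̄ₖ)` around `x̄ₖ` and Young's inequality on the cross term give, pointwise,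
`f(x̄ₖ) ≤ f(d̄ₖ) + c‖∇f(x̄ₖ)‖² + c‖z̄ₖ₋₁‖²` as soon as `Lc ≤ 1/2`, which the stepsize condition
ensures; quadratic growth of `f` and `∇f` makes every term integrable. -/

open scoped NNReal Gradient RealInnerProductSpace

section LipschitzGradient

variable {E : Type*} [NormedAddCommGroup E] [InnerProductSpace ℝ E] [CompleteSpace E]
  {f : E → ℝ} {K : ℝ≥0}

theorem abs_sub_sub_inner_gradient_le (hf : Differentiable ℝ f) (hK : LipschitzWith K (∇ f))
    (x y : E) : |f y - f x - ⟪∇ f x, y - x⟫| ≤ K * ‖y - x‖ ^ 2 := by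
  have hderiv : ∀ z ∈ segment ℝ x y, ‖fderiv ℝ f z - fderiv ℝ f x‖ ≤ K * ‖y - x‖ := by
    intro z hz
    rw [← toDual_gradient, ← toDual_gradient, ← map_sub, LinearIsometryEquiv.norm_map]
    calc ‖∇ f z - ∇ f x‖ ≤ K * ‖z - x‖ := hK.norm_sub_le z x
      _ ≤ K * ‖y - x‖ := by
        gcongr
        simpa [dist_eq_norm, norm_sub_rev x y] using segment_subset_closedBall_left x y hz
  have h := (convex_segment x y).norm_image_sub_le_of_norm_fderiv_le' (fun z _ => hf z) hderiv
    (left_mem_segment ℝ x y) (right_mem_segment ℝ x y)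
  rw [← toDual_gradient, InnerProductSpace.toDual_apply_apply, Real.norm_eq_abs] at h
  linarith

theorem le_image_sub_smul_add (hf : Differentiable ℝ f) (hK : LipschitzWith K (∇ f))
    {c : ℝ} (hc : 0 ≤ c) (hKc : K * c ≤ 1 / 2) (x v : E) :
    f x ≤ f (x - c • v) + c * ‖∇ f x‖ ^ 2 + c * ‖v‖ ^ 2 := by
  have hquad := (abs_le.1 (abs_sub_sub_inner_gradient_le hf hK x (x - c • v))).1
  rw [sub_sub_cancel_left, inner_neg_right, real_inner_smul_right, norm_neg, norm_smul,
    Real.norm_eq_abs, abs_of_nonneg hc] at hquad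
  have hinner : ⟪∇ f x, v⟫ ≤ (‖∇ f x‖ ^ 2 + ‖v‖ ^ 2) / 2 := by
    nlinarith [real_inner_le_norm (∇ f x) v, sq_nonneg (‖∇ f x‖ - ‖v‖)]
  nlinarith [mul_le_mul_of_nonneg_left hinner hc, mul_le_mul_of_nonneg_right hKc
    (mul_nonneg hc (sq_nonneg ‖v‖)), sq_nonneg ‖∇ f x‖]

theorem abs_le_of_lipschitz_gradient (hf : Differentiable ℝ f) (hK : LipschitzWith K (∇ f))
    (u : E) : |f u| ≤ |f 0| + ‖∇ f 0‖ * ‖u‖ + K * ‖u‖ ^ 2 := by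
  have hquad := abs_sub_sub_inner_gradient_le hf hK 0 u
  rw [sub_zero] at hquad
  have hinner := abs_real_inner_le_norm (∇ f 0) u
  rw [abs_le] at hquad hinner ⊢
  constructor <;> linarith [le_abs_self (f 0), neg_abs_le (f 0)]

theorem sq_norm_gradient_le (hK : LipschitzWith K (∇ f)) (u : E) :
    ‖∇ f u‖ ^ 2 ≤ 2 * ‖∇ f 0‖ ^ 2 + 2 * K ^ 2 * ‖u‖ ^ 2 := by
  have h := (norm_sub_norm_le (∇ f u) (∇ f 0)).trans (hK.norm_sub_le u 0)
  rw [sub_zero] at h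
  nlinarith [norm_nonneg (∇ f u), sq_nonneg (‖∇ f 0‖ - K * ‖u‖)]

end LipschitzGradient

section Integrability

variable {Ω : Type*} [MeasurableSpace Ω] {μ : Measure Ω} [IsFiniteMeasure μ]
  {E : Type*} [NormedAddCommGroup E] {v : Ω → E}

theorem MeasureTheory.MemLp.integrable_comp_of_abs_le_quadratic (hv : MemLp v 2 μ) {g : E → ℝ}
    (hg : Continuous g) {a b c : ℝ} (hbound : ∀ u, |g u| ≤ a + b * ‖u‖ + c * ‖u‖ ^ 2) :
    Integrable (fun ω => g (v ω)) μ := by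
  have h1 : Integrable (fun ω => ‖v ω‖) μ := (hv.integrable one_le_two).norm
  have h2 : Integrable (fun ω => ‖v ω‖ ^ 2) μ := hv.integrable_norm_pow'
  refine Integrable.mono' (((integrable_const a).add (h1.const_mul b)).add (h2.const_mul c))
    (hg.comp_aestronglyMeasurable hv.aestronglyMeasurable) (ae_of_all _ fun ω => ?_)
  simpa only [Real.norm_eq_abs, Pi.add_apply] using hbound (v ω)

variable [InnerProductSpace ℝ E] [CompleteSpace E] {f : E → ℝ} {K : ℝ≥0}

theorem MeasureTheory.MemLp.integrable_comp_of_lipschitz_gradient (hv : MemLp v 2 μ)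
    (hf : Differentiable ℝ f) (hK : LipschitzWith K (∇ f)) :
    Integrable (fun ω => f (v ω)) μ :=
  hv.integrable_comp_of_abs_le_quadratic hf.continuous (abs_le_of_lipschitz_gradient hf hK)

theorem MeasureTheory.MemLp.integrable_sq_norm_gradient_comp (hv : MemLp v 2 μ)
    (hK : LipschitzWith K (∇ f)) : Integrable (fun ω => ‖∇ f (v ω)‖ ^ 2) μ :=
  hv.integrable_comp_of_abs_le_quadratic (hK.continuous.norm.pow 2) (b := 0) fun u => by
    rw [abs_of_nonneg (sq_nonneg _), zero_mul, add_zero]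
    exact sq_norm_gradient_le hK u

end Integrability

section RowAverage

variable {n p : ℕ}

theorem rowAvg_zero : rowAvg (0 : Stacked n p) = 0 := by simp [rowAvg]

theorem rowAvg_add (X Y : Stacked n p) : rowAvg (X + Y) = rowAvg X + rowAvg Y := by
  simp [rowAvg, Finset.sum_add_distrib, smul_add]

theorem rowAvg_sub (X Y : Stacked n p) : rowAvg (X - Y) = rowAvg X - rowAvg Y := by
  simp [rowAvg, Finset.sum_sub_distrib, smul_sub]

theorem rowAvg_smul (c : ℝ) (X : Stacked n p) : rowAvg (c • X) = c • rowAvg X := by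
  simp only [rowAvg, Pi.smul_apply, ← Finset.smul_sum, smul_comm c]

theorem rowAvg_mulStacked {W : Matrix (Fin n) (Fin n) ℝ} (hcol : ∀ j, ∑ i, W i j = 1)
    (X : Stacked n p) : rowAvg (mulStacked W X) = rowAvg X := by
  simp only [rowAvg, mulStacked]
  rw [Finset.sum_comm]
  simp only [← Finset.sum_smul, hcol, one_smul]

theorem rowAvg_lcaMul_fst {W : Matrix (Fin n) (Fin n) ℝ} (hcol : ∀ j, ∑ i, W i j = 1)
    (η : ℝ) {A B : Stacked n p} (h : rowAvg B = rowAvg A) :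
    rowAvg (lcaMul W η (A, B)).1 = rowAvg A := by
  rw [lcaMul, rowAvg_sub, rowAvg_smul, rowAvg_smul, rowAvg_mulStacked hcol, h]
  module

theorem memLp_rowAvg {Ω : Type*} [MeasurableSpace Ω] {μ : Measure Ω} {X : Ω → Stacked n p}
    (h : ∀ i, MemLp (fun ω => X ω i) 2 μ) : MemLp (fun ω => rowAvg (X ω)) 2 μ :=
  (memLp_finsetSum univ fun i _ => h i).const_smul (n : ℝ)⁻¹

end RowAverage

namespace DSMT

variable {n p : ℕ} {Ω : Type} [MeasurableSpace Ω] [StandardBorelSpace Ω]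
  {μ : Measure Ω} [IsProbabilityMeasure μ] (S : DSMT n p Ω μ)

theorem rowAvg_xt_snd (k : ℕ) (ω : Ω) : rowAvg (S.xt k ω).2 = rowAvg (S.xt k ω).1 := by
  induction k with
  | zero => rw [S.hxt0]
  | succ k ih =>
    rw [S.hxt, rowAvg_lcaMul_fst S.hWcol _ (by rw [rowAvg_sub, rowAvg_sub, ih])]
    rfl

theorem rowAvg_x_succ (k : ℕ) (ω : Ω) :
    rowAvg (S.x (k + 1) ω) = rowAvg (S.x k ω) - S.α • rowAvg (S.y k ω) := by
  rw [S.hx, S.hxt, rowAvg_lcaMul_fst S.hWcol _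
    (by rw [rowAvg_sub, rowAvg_sub, S.rowAvg_xt_snd]), rowAvg_sub, rowAvg_smul, S.hx]

theorem rowAvg_yt_snd (k : ℕ) (ω : Ω) : rowAvg (S.yt k ω).2 = rowAvg (S.yt k ω).1 := by
  induction k with
  | zero => rw [S.hyt0]
  | succ k ih =>
    rw [S.hyt, rowAvg_lcaMul_fst S.hWcol _
      (by rw [rowAvg_sub, rowAvg_sub, rowAvg_add, rowAvg_add, ih])]
    rfl

theorem rowAvg_y (k : ℕ) (ω : Ω) : rowAvg (S.y k ω) = rowAvg (S.z k ω) := by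
  induction k with
  | zero => rw [S.hy0]
  | succ k ih =>
    rw [S.hy, S.hyt, rowAvg_lcaMul_fst S.hWcol _
      (by rw [rowAvg_sub, rowAvg_sub, rowAvg_add, rowAvg_add, S.rowAvg_yt_snd]),
      rowAvg_sub, rowAvg_add, ← S.hy, ih, add_sub_cancel_left]

theorem xbar_sub_dbar (k : ℕ) (ω : Ω) :
    S.xbar k ω - S.dbar k ω = (S.α * S.β / (1 - S.β)) • rowAvg (S.zm k ω) := by
  cases k with
  | zero => simp [xbar, dbar, zm, rowAvg_zero]
  | succ k =>
    have hβ : 1 - S.β ≠ 0 := (sub_pos.2 S.hβ1).ne'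
    simp only [xbar, dbar, zm]
    rw [S.rowAvg_x_succ, S.rowAvg_y, show 1 / (1 - S.β) = 1 + S.β / (1 - S.β) by field_simp; ring]
    module

theorem hasGradientAt_F (v : Vec p) :
    HasGradientAt S.F ((n : ℝ)⁻¹ • ∑ i, ∇ (S.f i) v) v := by
  have hsum : HasFDerivAt (fun u => ∑ i, S.f i u) (∑ i, fderiv ℝ (S.f i) v) v :=
    HasFDerivAt.fun_sum fun i _ => (S.hdiff i v).hasFDerivAt
  have hF : HasFDerivAt S.F ((n : ℝ)⁻¹ • ∑ i, fderiv ℝ (S.f i) v) v := hsum.const_mul _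
  convert hF.hasGradientAt using 1
  rw [_root_.map_smul, map_sum]
  rfl

theorem differentiable_F : Differentiable ℝ S.F := fun v => (S.hasGradientAt_F v).differentiableAt

theorem lipschitzWith_gradient_F : LipschitzWith S.L.toNNReal (∇ S.F) := by
  refine lipschitzWith_iff_norm_sub_le.2 fun a b => ?_
  rw [(S.hasGradientAt_F a).gradient, (S.hasGradientAt_F b).gradient, ← smul_sub,
    ← Finset.sum_sub_distrib, norm_smul, Real.coe_toNNReal _ S.hL.le]
  have hn : (0 : ℝ) < n := Nat.cast_pos.2 S.hn
  calc ‖(n : ℝ)⁻¹‖ * ‖∑ i, (∇ (S.f i) a - ∇ (S.f i) b)‖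
      ≤ (n : ℝ)⁻¹ * ∑ _i : Fin n, S.L * ‖a - b‖ := by
        rw [Real.norm_of_nonneg (by positivity)]
        gcongr
        exact (norm_sum_le _ _).trans (Finset.sum_le_sum fun i _ => S.hsmooth i a b)
    _ = S.L * ‖a - b‖ := by
        rw [Finset.sum_const, Finset.card_univ, Fintype.card_fin, nsmul_eq_mul]
        field_simp

theorem memLp_z (k : ℕ) (i : Fin n) : MemLp (fun ω => S.z k ω i) 2 μ := by
  induction k with
  | zero =>
    rw [show (fun ω => S.z 0 ω i) = (1 - S.β) • fun ω => S.g 0 ω i from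
      funext fun ω => congrFun (S.hz0 ω) i]
    exact (S.hg_L2 0 i).const_smul _
  | succ k ih =>
    rw [show (fun ω => S.z (k + 1) ω i) = S.β • (fun ω => S.z k ω i)
        + (1 - S.β) • fun ω => S.g (k + 1) ω i from funext fun ω => congrFun (S.hz k ω) i]
    exact (ih.const_smul _).add ((S.hg_L2 (k + 1) i).const_smul _)

theorem memLp_xbar (k : ℕ) : MemLp (S.xbar k) 2 μ := memLp_rowAvg (S.hx_L2 k)

theorem memLp_dbar (k : ℕ) : MemLp (S.dbar k) 2 μ := by
  cases k with
  | zero => exact S.memLp_xbar 0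
  | succ k =>
    show MemLp ((1 / (1 - S.β)) • S.xbar (k + 1) - (S.β / (1 - S.β)) • S.xbar k) 2 μ
    exact ((S.memLp_xbar (k + 1)).const_smul _).sub ((S.memLp_xbar k).const_smul _)

theorem memLp_rowAvg_zm (k : ℕ) : MemLp (fun ω => rowAvg (S.zm k ω)) 2 μ := by
  cases k with
  | zero => simpa only [zm, rowAvg_zero] using memLp_const 0
  | succ k => exact memLp_rowAvg (S.memLp_z k)

theorem F_xbar_le {c : ℝ} (hc : c = S.α * S.β / (1 - S.β)) (hLc : S.L * c ≤ 1 / 2)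
    (k : ℕ) (ω : Ω) : S.F (S.xbar k ω) ≤ S.F (S.dbar k ω) + c * ‖∇ S.F (S.xbar k ω)‖ ^ 2
      + c * ‖rowAvg (S.zm k ω)‖ ^ 2 := by
  subst hc
  have hc0 : 0 ≤ S.α * S.β / (1 - S.β) :=
    div_nonneg (mul_nonneg S.hα.le S.hβ0.le) (sub_pos.2 S.hβ1).le
  have h := le_image_sub_smul_add S.differentiable_F S.lipschitzWith_gradient_F hc0
    (by rwa [Real.coe_toNNReal _ S.hL.le]) (S.xbar k ω) (rowAvg (S.zm k ω))
  rwa [← S.xbar_sub_dbar, sub_sub_cancel] at h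

theorem integrable_F_sub_Fstar {v : Ω → Vec p} (hv : MemLp v 2 μ) :
    Integrable (fun ω => S.F (v ω) - S.Fstar) μ :=
  (hv.integrable_comp_of_lipschitz_gradient S.differentiable_F S.lipschitzWith_gradient_F).sub
    (integrable_const _)

end DSMT

/-- Lemma 4 in the paper: relating `E[f(x̄ₖ) − f^*]` to `E[f(d̄ₖ) − f^*]`. -/
theorem dsmt_fx_fd {n p : ℕ} {Ω : Type} [MeasurableSpace Ω] [StandardBorelSpace Ω]
    {μ : MeasureTheory.Measure Ω} [MeasureTheory.IsProbabilityMeasure μ]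
    (S : DSMT n p Ω μ)
    (hstep : S.α ≤ (1 - S.β) / (3 * S.β * S.L)) :
    ∀ k : ℕ,
      S.Efx k ≤ S.Efd k + (S.α * S.β / (1 - S.β)) * S.Egrad k
        + (S.α * S.β / (1 - S.β)) * S.Ezm k := by
  intro k
  set c := S.α * S.β / (1 - S.β) with hc
  have hLc : S.L * c ≤ 1 / 2 := by
    have hβL : 0 < S.β * S.L := mul_pos S.hβ0 S.hL
    rw [le_div_iff₀ (by linarith)] at hstep
    rw [hc, mul_div_assoc', div_le_iff₀ (sub_pos.2 S.hβ1)]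
    nlinarith [S.hβ1]
  have hFd := S.integrable_F_sub_Fstar (S.memLp_dbar k)
  have hgrad := ((S.memLp_xbar k).integrable_sq_norm_gradient_comp
    S.lipschitzWith_gradient_F).const_mul c
  have hFd_grad : Integrable
      (fun ω => S.F (S.dbar k ω) - S.Fstar + c * ‖∇ S.F (S.xbar k ω)‖ ^ 2) μ := hFd.add hgrad
  have hz := (S.memLp_rowAvg_zm k).integrable_norm_pow'.const_mul c
  calc S.Efx k ≤ ∫ ω, ((S.F (S.dbar k ω) - S.Fstar)
        + c * ‖∇ S.F (S.xbar k ω)‖ ^ 2 + c * ‖rowAvg (S.zm k ω)‖ ^ 2) ∂μ :=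
        integral_mono (S.integrable_F_sub_Fstar (S.memLp_xbar k)) (hFd_grad.add hz)
          fun ω => by linarith [S.F_xbar_le hc hLc k ω]
    _ = S.Efd k + c * S.Egrad k + c * S.Ezm k := by
        rw [integral_add hFd_grad hz, integral_add hFd hgrad, integral_const_mul,
          integral_const_mul]
        rfl
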